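/- Let A be a bialgebra over a field K which is conilpotent in the sense that for each a ∈ A there exists n with (id − η∘ε)^{⊗n} ∘ Δ^{(n)}(a) = 0. Then A is a Hopf algebra, with antipode given by S = Σ_{n≥0} (−1)^n m^{(n)} ∘ (id − η∘ε)^{⊗n} ∘ Δ^{(n)}. -/

import Mathlib

open TensorProduct

noncomputable section

variable (K : Type*) [Field K] [CharZero K]
variable (A : Type*) [Ring A] [Bialgebra K A]

/-- Convolution product of linear endomorphisms of a bialgebra:
`f ⋆ g = m ∘ (f ⊗ g) ∘ Δ`. -/
def conv (f g : A →ₗ[K] A) : A →ₗ[K] A :=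
  LinearMap.mul' K A ∘ₗ TensorProduct.map f g ∘ₗ (Coalgebra.comul : A →ₗ[K] A ⊗[K] A)

/-- `η ∘ ε`, the unit of the convolution algebra. -/
def unitCounit : A →ₗ[K] A :=
  Algebra.linearMap K A ∘ₗ (Coalgebra.counit : A →ₗ[K] K)

/-- Convolution powers of `J = id − η∘ε`; note
`J^{⋆n} = m^{(n)} ∘ (id − η∘ε)^{⊗n} ∘ Δ^{(n)}`. -/
def convPowJ : ℕ → (A →ₗ[K] A)
  | 0 => unitCounit K A
  | n + 1 => conv K A (LinearMap.id - unitCounit K A) (convPowJ n)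

/-!
In the convolution ring of `A →ₗ[K] A` (unit `η∘ε`), `S` is the geometric series
`Σ (1 - id)^{⋆k}`, since `(1 - id)^{⋆k} = (-1)^k J^{⋆k}` with `J = id - η∘ε`. Its partial sums `Tₙ`
satisfy `Tₙ ⋆ id = id ⋆ Tₙ = 1 - (1 - id)^{⋆n}`, and conilpotency kills the error term at any given
point for large `n`. The value of `S ⋆ id` at `a` involves `S` only at the finitely many tensor
factors of `Δa`, where `S` agrees with `Tₙ` for large `n`.
-/

open Coalgebra Filter WithConv

section Convolution

variable {R C B ι : Type*} [CommSemiring R] [AddCommMonoid C] [Module R C] [CoalgebraStruct R C]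
  [NonUnitalNonAssocSemiring B] [Module R B] [SMulCommClass R B B] [IsScalarTower R B B]
  {l : Filter ι} {F : ι → WithConv (C →ₗ[R] B)} {f : WithConv (C →ₗ[R] B)}

theorem eventually_convMul_apply_eq_left (hF : ∀ c, ∀ᶠ i in l, F i c = f c)
    (g : WithConv (C →ₗ[R] B)) (c : C) : ∀ᶠ i in l, (F i * g) c = (f * g) c := by
  let 𝓡 := ℛ R c
  filter_upwards [(eventually_all_finset 𝓡.index).2 fun j _ ↦ hF (𝓡.left j)] with i hi
  simp only [𝓡.convMul_apply]
  exact Finset.sum_congr rfl fun j hj ↦ by rw [hi j hj]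

theorem eventually_convMul_apply_eq_right (hF : ∀ c, ∀ᶠ i in l, F i c = f c)
    (g : WithConv (C →ₗ[R] B)) (c : C) : ∀ᶠ i in l, (g * F i) c = (g * f) c := by
  let 𝓡 := ℛ R c
  filter_upwards [(eventually_all_finset 𝓡.index).2 fun j _ ↦ hF (𝓡.right j)] with i hi
  simp only [𝓡.convMul_apply]
  exact Finset.sum_congr rfl fun j hj ↦ by rw [hi j hj]

end Convolution

section
omit [CharZero K]
variable {K A}

lemma toConv_conv (f g : A →ₗ[K] A) : toConv (conv K A f g) = toConv f * toConv g := rfl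

lemma toConv_unitCounit : toConv (unitCounit K A) = 1 := rfl

lemma toConv_convPowJ (n : ℕ) : toConv (convPowJ K A n) = (toConv LinearMap.id - 1) ^ n := by
  induction n with
  | zero => rfl
  | succ n ih =>
    rw [pow_succ', ← ih, ← toConv_unitCounit, ← toConv_sub, ← toConv_conv]
    rfl

lemma ofConv_one_sub_toConv_id_pow (n : ℕ) :
    ((1 - toConv LinearMap.id : WithConv (A →ₗ[K] A)) ^ n).ofConv =
      (-1 : K) ^ n • convPowJ K A n := by
  change _ = ((-1 : K) ^ n • toConv (convPowJ K A n)).ofConv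
  rw [toConv_convPowJ, ← neg_sub, neg_pow, Algebra.smul_def, map_pow, map_neg, map_one]

end

theorem stmt5
    (hconil : ∀ a : A, ∃ N : ℕ, ∀ n ≥ N, convPowJ K A n a = 0)
    (S : A →ₗ[K] A)
    (hS : ∀ a : A, ∃ N : ℕ, ∀ n ≥ N,
      S a = ∑ k ∈ Finset.range n, ((-1 : K) ^ k) • convPowJ K A k a) :
    conv K A S LinearMap.id = unitCounit K A ∧
    conv K A LinearMap.id S = unitCounit K A := by
  set x : WithConv (A →ₗ[K] A) := toConv LinearMap.id
  have hT : ∀ a, ∀ᶠ n in atTop, (∑ k ∈ Finset.range n, (1 - x) ^ k) a = toConv S a := fun a ↦ by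
    obtain ⟨N, hN⟩ := hS a
    filter_upwards [eventually_ge_atTop N] with n hn
    simp only [x, ofConv_sum, LinearMap.sum_apply, ofConv_one_sub_toConv_id_pow,
      LinearMap.smul_apply, hN n hn]
  have hJ : ∀ a, ∀ᶠ n in atTop, ((1 - x) ^ n : WithConv (A →ₗ[K] A)) a = 0 := fun a ↦ by
    obtain ⟨N, hN⟩ := hconil a
    filter_upwards [eventually_ge_atTop N] with n hn
    rw [ofConv_one_sub_toConv_id_pow, LinearMap.smul_apply, hN n hn, smul_zero]
  refine ⟨LinearMap.ext fun a ↦ ?_, LinearMap.ext fun a ↦ ?_⟩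
  · obtain ⟨n, hSn, hJn⟩ := ((eventually_convMul_apply_eq_left hT x a).and (hJ a)).exists
    have hgeom := geom_sum_mul_neg (1 - x) n
    rw [sub_sub_cancel] at hgeom
    change (toConv S * x) a = (1 : WithConv (A →ₗ[K] A)) a
    rw [← hSn, hgeom, ofConv_sub, LinearMap.sub_apply, hJn, sub_zero]
  · obtain ⟨n, hSn, hJn⟩ := ((eventually_convMul_apply_eq_right hT x a).and (hJ a)).exists
    have hgeom := mul_neg_geom_sum (1 - x) n
    rw [sub_sub_cancel] at hgeom
    change (x * toConv S) a = (1 : WithConv (A →ₗ[K] A)) a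
    rw [← hSn, hgeom, ofConv_sub, LinearMap.sub_apply, hJn, sub_zero]

end
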